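/- arXiv:1905.08900 — 4 statements merged into one kernel-verified Lean document; each statement's English description precedes it below -/
import Mathlib

section
/- Let W be a block lower-triangular row-stochastic matrix of the form [[I_p, 0],[W_qp, W_qq]] where W_qq is convergent (W_qq^t → 0). Then for any initial matrix Y^{(0)} = [Y_p; Y_q^{(0)}] with the top p rows fixed, the iteration Y^{(t+1)} = W Y^{(t)} converges, and the limit of the bottom block is (I − W_qq)^{−1} W_qp Y_p, independent of the initialization Y_q^{(0)}. -/
/-!
The limit `L = (1 - W_qq)⁻¹ W_qp Y_p` is a fixed point of the affine map `Y ↦ W_qp Y_p + W_qq Y`,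
so the error of the iteration satisfies `Y_q^{(t)} - L = W_qq^t (Y_q^{(0)} - L)`, which tends to
`0`. The inverse exists because a vector in the kernel of `1 - W_qq` is fixed by every power of
`W_qq`, hence equals `lim W_qq^t v = 0`.
-/

open Filter Topology

namespace Matrix

variable {m n : Type*} [Fintype m] [DecidableEq m]

theorem isUnit_one_sub_of_tendsto_pow_zero {𝕜 : Type*} [Field 𝕜] [TopologicalSpace 𝕜]
    [IsTopologicalRing 𝕜] [T2Space 𝕜] {A : Matrix m m 𝕜}
    (hA : Tendsto (fun t => A ^ t) atTop (𝓝 0)) : IsUnit (1 - A) := by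
  rw [isUnit_iff_isUnit_det, isUnit_iff_ne_zero]
  intro hdet
  obtain ⟨v, hv, hker⟩ := exists_mulVec_eq_zero_iff.2 hdet
  have hfix : A *ᵥ v = v := by
    rwa [sub_mulVec, one_mulVec, sub_eq_zero, eq_comm] at hker
  have hpow : ∀ t, A ^ t *ᵥ v = v := by
    intro t
    induction t with
    | zero => simp
    | succ t ih => rw [pow_succ', ← mulVec_mulVec, ih, hfix]
  have hlim : Tendsto (fun t => A ^ t *ᵥ v) atTop (𝓝 (0 *ᵥ v)) :=
    ((continuous_id.matrix_mulVec continuous_const).tendsto 0).comp hA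
  simp only [hpow, zero_mulVec, tendsto_const_nhds_iff] at hlim
  exact hv hlim

theorem nonsing_inv_one_sub_mul_eq_add_mul {R : Type*} [CommRing R] {A : Matrix m m R}
    (hA : IsUnit (1 - A)) (B : Matrix m n R) :
    (1 - A)⁻¹ * B = B + A * ((1 - A)⁻¹ * B) := by
  have h := mul_nonsing_inv_cancel_left (1 - A) B ((isUnit_iff_isUnit_det _).1 hA)
  rwa [Matrix.sub_mul, Matrix.one_mul, sub_eq_iff_eq_add] at h

section AffineIterate

variable {R : Type*} [Ring R] {A : Matrix m m R} {B L : Matrix m n R}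
  {Y : ℕ → Matrix m n R}

theorem sub_eq_pow_mul_of_affine_iterate (hY : ∀ t, Y (t + 1) = B + A * Y t)
    (hL : L = B + A * L) (t : ℕ) : Y t - L = A ^ t * (Y 0 - L) := by
  induction t with
  | zero => simp
  | succ t ih =>
    calc Y (t + 1) - L = A * (Y t - L) := by
          rw [hY, Matrix.mul_sub]; nth_rewrite 1 [hL]; abel
      _ = A ^ (t + 1) * (Y 0 - L) := by rw [ih, ← Matrix.mul_assoc, pow_succ']

theorem tendsto_of_affine_iterate [TopologicalSpace R] [IsTopologicalRing R]
    (hA : Tendsto (fun t => A ^ t) atTop (𝓝 0)) (hY : ∀ t, Y (t + 1) = B + A * Y t)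
    (hL : L = B + A * L) : Tendsto Y atTop (𝓝 L) := by
  have herr : Tendsto (fun t => A ^ t * (Y 0 - L)) atTop (𝓝 ((0 : Matrix m m R) * (Y 0 - L))) :=
    ((continuous_id.matrix_mul continuous_const).tendsto 0).comp hA
  rw [Matrix.zero_mul] at herr
  simp only [← sub_eq_pow_mul_of_affine_iterate hY hL] at herr
  exact tendsto_sub_nhds_zero_iff.1 herr

end AffineIterate

end Matrix

open Matrix in
theorem stmt_6_general (p q s : ℕ)
    (Wqp : Matrix (Fin q) (Fin p) ℝ) (Wqq : Matrix (Fin q) (Fin q) ℝ)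
    (hconv : Tendsto (fun t => Wqq ^ t) atTop (nhds 0))
    (Yp : Matrix (Fin p) (Fin s) ℝ)
    (Yq : ℕ → Matrix (Fin q) (Fin s) ℝ)
    (hiter : ∀ t, Yq (t + 1) = Wqp * Yp + Wqq * Yq t) :
    Tendsto Yq atTop (nhds ((1 - Wqq)⁻¹ * (Wqp * Yp))) :=
  tendsto_of_affine_iterate hconv hiter
    (nonsing_inv_one_sub_mul_eq_add_mul (isUnit_one_sub_of_tendsto_pow_zero hconv) _)

/-- Block lower-triangular row-stochastic iteration: with top block
identity and convergent bottom-right block `Wqq`, the iteration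
`Yq^{(t+1)} = Wqp * Yp + Wqq * Yq^{(t)}` converges to `(I - Wqq)⁻¹ * Wqp * Yp`,
independent of the initialization. -/
theorem stmt_6 (p q s : ℕ)
    (Wqp : Matrix (Fin q) (Fin p) ℝ) (Wqq : Matrix (Fin q) (Fin q) ℝ)
    (hqp : ∀ i j, 0 ≤ Wqp i j) (hqq : ∀ i j, 0 ≤ Wqq i j)
    (hrow : ∀ i, (∑ j, Wqp i j) + (∑ j, Wqq i j) = 1)
    (hconv : Tendsto (fun t => Wqq ^ t) atTop (nhds 0))
    (Yp : Matrix (Fin p) (Fin s) ℝ)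
    (Yq : ℕ → Matrix (Fin q) (Fin s) ℝ)
    (hiter : ∀ t, Yq (t + 1) = Wqp * Yp + Wqq * Yq t) :
    Tendsto Yq atTop (nhds ((1 - Wqq)⁻¹ * (Wqp * Yp))) :=
  stmt_6_general p q s Wqp Wqq hconv Yp Yq hiter
end

section
/- Let M be a substochastic matrix such that for every index i, either row i has sum strictly less than 1, or there exists a sink node k* and m ≥ 1 with (M^m)_{i k*} > 0. Then M^t → 0 as t → ∞. -/
open Filter Topology Matrix

/-! The row sums `M ^ t *ᵥ 1` decrease in `t` because `M` is substochastic, and row `i` of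
`M ^ (m + 1)` loses mass as soon as `(M ^ m) i k > 0` for a sink `k`; so every row sum eventually
drops below `1`, and then for a single power `M ^ N` all of them do. For a nonnegative matrix the
largest row sum is the `L∞` operator norm, hence `‖M ^ t‖ ≤ 1` for all `t` and `‖M ^ N‖ < 1`,
which gives `‖M ^ t‖ ≤ ‖M ^ N‖ ^ (t / N) → 0`. -/

theorem tendsto_pow_atTop_nhds_zero_of_norm_pow_lt_one {R : Type*} [SeminormedRing R] {a : R}
    (hbdd : ∀ t, ‖a ^ t‖ ≤ 1) {N : ℕ} (hN : 0 < N) (h : ‖a ^ N‖ < 1) :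
    Tendsto (a ^ ·) atTop (𝓝 0) := by
  have hblock : ∀ k r, ‖a ^ (N * k + r)‖ ≤ ‖a ^ N‖ ^ k := by
    intro k r
    induction k with
    | zero => simpa using hbdd r
    | succ k ih =>
      calc ‖a ^ (N * (k + 1) + r)‖ = ‖a ^ N * a ^ (N * k + r)‖ := by
            rw [← pow_add]; ring_nf
        _ ≤ ‖a ^ N‖ * ‖a ^ N‖ ^ k := norm_mul_le_of_le le_rfl ih
        _ = ‖a ^ N‖ ^ (k + 1) := (pow_succ' _ _).symm
  have hdiv : Tendsto (· / N) atTop atTop := Nat.tendsto_div_const_atTop hN.ne'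
  refine squeeze_zero_norm (fun t => ?_)
    ((tendsto_pow_atTop_nhds_zero_of_lt_one (norm_nonneg _) h).comp hdiv)
  simpa only [Function.comp_apply, Nat.div_add_mod] using hblock (t / N) (t % N)

namespace Matrix

variable {m n α : Type*} [Fintype n]

theorem mulVec_one_apply [NonAssocSemiring α] (A : Matrix m n α) (i : m) :
    (A *ᵥ 1) i = ∑ j, A i j := by
  simp [mulVec, dotProduct]

theorem mulVec_one_nonneg [Semiring α] [PartialOrder α] [IsOrderedRing α] {A : Matrix m n α}
    (hA : ∀ i j, 0 ≤ A i j) : 0 ≤ A *ᵥ 1 := fun i =>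
  Finset.sum_nonneg fun j _ => by simpa using hA i j

theorem mulVec_le_mulVec_of_nonneg [Semiring α] [PartialOrder α] [IsOrderedRing α]
    {A : Matrix m n α} (hA : ∀ i j, 0 ≤ A i j) {v w : n → α} (hvw : v ≤ w) :
    A *ᵥ v ≤ A *ᵥ w := fun i =>
  Finset.sum_le_sum fun j _ => mul_le_mul_of_nonneg_left (hvw j) (hA i j)

theorem mulVec_apply_lt_mulVec_apply_of_nonneg [Semiring α] [PartialOrder α]
    [IsStrictOrderedRing α]
    {A : Matrix m n α} (hA : ∀ i j, 0 ≤ A i j) {v w : n → α} (hvw : v ≤ w) {i : m} {k : n}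
    (hik : 0 < A i k) (hk : v k < w k) : (A *ᵥ v) i < (A *ᵥ w) i :=
  Finset.sum_lt_sum (fun j _ => mul_le_mul_of_nonneg_left (hvw j) (hA i j))
    ⟨k, Finset.mem_univ k, mul_lt_mul_of_pos_left hk hik⟩

section Substochastic

variable [DecidableEq n] [Semiring α] [PartialOrder α] [IsOrderedRing α] {A : Matrix n n α}

theorem antitone_pow_mulVec_one (hA : ∀ i j, 0 ≤ A i j) (hsub : A *ᵥ 1 ≤ 1) :
    Antitone fun t : ℕ => A ^ t *ᵥ 1 :=
  antitone_nat_of_succ_le fun t => by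
    rw [pow_succ, ← mulVec_mulVec]
    exact mulVec_le_mulVec_of_nonneg (pow_apply_nonneg hA t) hsub

theorem pow_mulVec_one_le_one (hA : ∀ i j, 0 ≤ A i j) (hsub : A *ᵥ 1 ≤ 1) (t : ℕ) :
    A ^ t *ᵥ 1 ≤ 1 := by
  simpa using antitone_pow_mulVec_one hA hsub t.zero_le

theorem exists_pos_pow_mulVec_one_lt_one (hA : ∀ i j, 0 ≤ A i j) (hsub : A *ᵥ 1 ≤ 1)
    (hleak : ∀ i, ∃ t, (A ^ t *ᵥ 1) i < 1) : ∃ N, 0 < N ∧ ∀ i, (A ^ N *ᵥ 1) i < 1 := by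
  have hev : ∀ i, ∀ᶠ t in atTop, (A ^ t *ᵥ 1) i < 1 := fun i =>
    let ⟨t, ht⟩ := hleak i
    eventually_atTop.2 ⟨t, fun s hs => (antitone_pow_mulVec_one hA hsub hs i).trans_lt ht⟩
  exact ((eventually_gt_atTop 0).and (eventually_all.2 hev)).exists

end Substochastic

theorem pow_succ_mulVec_one_apply_lt_one [DecidableEq n] [Semiring α] [PartialOrder α]
    [IsStrictOrderedRing α] {A : Matrix n n α} (hA : ∀ i j, 0 ≤ A i j)
    (hsub : A *ᵥ 1 ≤ 1) {i k : n} {m : ℕ} (hk : (A *ᵥ 1) k < 1) (hik : 0 < (A ^ m) i k) :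
    (A ^ (m + 1) *ᵥ 1) i < 1 :=
  calc (A ^ (m + 1) *ᵥ 1) i = (A ^ m *ᵥ (A *ᵥ 1)) i := by rw [pow_succ, mulVec_mulVec]
    _ < (A ^ m *ᵥ 1) i :=
      mulVec_apply_lt_mulVec_apply_of_nonneg (pow_apply_nonneg hA m) hsub hik hk
    _ ≤ 1 := pow_mulVec_one_le_one hA hsub m i

section LinftyOpNorm

attribute [local instance] Matrix.linftyOpSeminormedAddCommGroup Matrix.linftyOpSemiNormedRing

theorem linfty_opNorm_eq_norm_mulVec_one [Fintype m] {A : Matrix m n ℝ}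
    (hA : ∀ i j, 0 ≤ A i j) :
    ‖A‖ = ‖A *ᵥ 1‖ := by
  rw [linfty_opNorm_def, Pi.norm_def]
  congr 2
  funext i
  rw [mulVec_one_apply, Real.nnnorm_of_nonneg (Finset.sum_nonneg fun j _ => hA i j)]
  ext
  simp [Real.norm_of_nonneg (hA i _)]

theorem tendsto_pow_atTop_nhds_zero_of_pow_mulVec_one_lt_one [DecidableEq n] {A : Matrix n n ℝ}
    (hA : ∀ i j, 0 ≤ A i j) (hsub : A *ᵥ 1 ≤ 1) {N : ℕ} (hN : 0 < N)
    (hlt : ∀ i, (A ^ N *ᵥ 1) i < 1) :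
    Tendsto (A ^ ·) atTop (𝓝 0) := by
  have hnorm : ∀ t, ‖A ^ t‖ = ‖A ^ t *ᵥ 1‖ := fun t =>
    linfty_opNorm_eq_norm_mulVec_one (pow_apply_nonneg hA t)
  refine tendsto_pow_atTop_nhds_zero_of_norm_pow_lt_one (fun t => ?_) hN ?_
  · rw [hnorm, pi_norm_le_iff_of_nonneg zero_le_one]
    intro i
    rw [Real.norm_of_nonneg (mulVec_one_nonneg (pow_apply_nonneg hA t) i)]
    exact pow_mulVec_one_le_one hA hsub t i
  · rw [hnorm, pi_norm_lt_iff zero_lt_one]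
    intro i
    rw [Real.norm_of_nonneg (mulVec_one_nonneg (pow_apply_nonneg hA N) i)]
    exact hlt i

end LinftyOpNorm

end Matrix

/-- If M is substochastic and every node either is a sink node or
is reachable from a sink node (some power has a positive entry connecting them),
then M^t → 0. -/
theorem stmt_10 (q : ℕ) (M : Matrix (Fin q) (Fin q) ℝ)
    (hnonneg : ∀ i j, 0 ≤ M i j)
    (hsub : ∀ i, ∑ j, M i j ≤ 1)
    (hreach : ∀ i : Fin q, (∑ j, M i j < 1) ∨
      ∃ (k : Fin q) (m : ℕ), 1 ≤ m ∧ (∑ j, M k j < 1) ∧ 0 < (M ^ m) i k) :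
    Tendsto (fun t => M ^ t) atTop (nhds 0) := by
  simp only [← mulVec_one_apply] at hsub hreach
  have hleak : ∀ i, ∃ t, (M ^ t *ᵥ 1) i < 1 := fun i => by
    rcases hreach i with hi | ⟨k, m, -, hk, hik⟩
    · exact ⟨1, by simpa using hi⟩
    · exact ⟨m + 1, pow_succ_mulVec_one_apply_lt_one hnonneg hsub hk hik⟩
  obtain ⟨N, hN, hlt⟩ := exists_pos_pow_mulVec_one_lt_one hnonneg hsub hleak
  exact tendsto_pow_atTop_nhds_zero_of_pow_mulVec_one_lt_one hnonneg hsub hN hlt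
end

section
/- If M is a substochastic matrix and there exist a sink node k* and m ≥ 1 with (M^m)_{i k*} > 0, then ∑_j (M^{m+1})_{ij} < 1. -/
lemma pow_nonneg_entry (q : ℕ) (M : Matrix (Fin q) (Fin q) ℝ)
    (hnonneg : ∀ i j, 0 ≤ M i j) (m : ℕ) : ∀ i j, 0 ≤ (M ^ m) i j := by
  induction m with
  | zero => intro i j; simp [Matrix.one_apply]; positivity
  | succ n ih =>
    intro i j
    rw [pow_succ, Matrix.mul_apply]
    exact Finset.sum_nonneg fun l _ => mul_nonneg (ih i l) (hnonneg l j)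

lemma pow_rowsum_le (q : ℕ) (M : Matrix (Fin q) (Fin q) ℝ)
    (hnonneg : ∀ i j, 0 ≤ M i j) (hsub : ∀ i, ∑ j, M i j ≤ 1) (m : ℕ) :
    ∀ i, ∑ j, (M ^ m) i j ≤ 1 := by
  induction m with
  | zero => intro i; simp [Matrix.one_apply]
  | succ n ih =>
    intro i
    have : ∑ j, (M ^ (n + 1)) i j = ∑ l, (M ^ n) i l * ∑ j, M l j := by
      simp only [pow_succ, Matrix.mul_apply, Finset.mul_sum]
      rw [Finset.sum_comm]
    rw [this]
    calc ∑ l, (M ^ n) i l * ∑ j, M l j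
        ≤ ∑ l, (M ^ n) i l * 1 :=
          Finset.sum_le_sum fun l _ =>
            mul_le_mul_of_nonneg_left (hsub l) (pow_nonneg_entry q M hnonneg n i l)
      _ = ∑ l, (M ^ n) i l := by simp
      _ ≤ 1 := ih i

/-- If M is substochastic, k* is a sink node, and (M^m)_{i k*} > 0
for some m ≥ 1, then the (m+1)-step row sum of row i is strictly less than 1. -/
theorem stmt_11 (q : ℕ) (M : Matrix (Fin q) (Fin q) ℝ)
    (hnonneg : ∀ i j, 0 ≤ M i j)
    (hsub : ∀ i, ∑ j, M i j ≤ 1)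
    (i k : Fin q) (hk : ∑ j, M k j < 1)
    (m : ℕ) (hm : 1 ≤ m) (hpos : 0 < (M ^ m) i k) :
    ∑ j, (M ^ (m + 1)) i j < 1 := by
  have heq : ∑ j, (M ^ (m + 1)) i j = ∑ l, (M ^ m) i l * ∑ j, M l j := by
    simp only [pow_succ, Matrix.mul_apply, Finset.mul_sum]
    rw [Finset.sum_comm]
  rw [heq]
  calc ∑ l, (M ^ m) i l * ∑ j, M l j
      < ∑ l, (M ^ m) i l * 1 := by
        apply Finset.sum_lt_sum
        · intro l _
          exact mul_le_mul_of_nonneg_left (hsub l) (pow_nonneg_entry q M hnonneg m i l)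
        · exact ⟨k, Finset.mem_univ k, by nlinarith⟩
    _ = ∑ l, (M ^ m) i l := by simp
    _ ≤ 1 := pow_rowsum_le q M hnonneg hsub m i
end

section
/- If a nonnegative matrix W is irreducible (its associated directed graph is strongly connected) and row-stochastic, then 1 is a simple eigenvalue of W (the dominant eigenvalue is unique). -/
/-!
The all-ones vector is fixed by a stochastic matrix `W`, and by the maximum principle
(averages of `x` cannot exceed `max x`, and irreducibility lets every index see the maximum)
every fixed vector is constant, so the eigenspace of `1` is a line. There is no Jordan block
either: if `(W - 1)² x = 0` then `(W - 1) x` is a constant `c`, i.e. `W x = x + c`, and comparing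
at a maximum and at a minimum of `x` gives `c = 0`. Hence the generalized eigenspace of `1` is
one-dimensional, and its dimension is the multiplicity of `1` as a root of the characteristic
polynomial. Complexifying a real matrix does not change that multiplicity.
-/

open Finset Polynomial Module

namespace Module.End

variable {R M : Type*} [CommRing R] [AddCommGroup M] [Module R M]

theorem maxGenEigenspace_eq_eigenspace_of_ker_sq_le (f : End R M) (μ : R)
    (h : LinearMap.ker ((f - μ • 1) ^ 2) ≤ LinearMap.ker (f - μ • 1)) :
    f.maxGenEigenspace μ = f.eigenspace μ := by
  refine le_antisymm (fun x hx => ?_) (f.genEigenspace_le_maximal μ 1)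
  rw [eigenspace_def, LinearMap.mem_ker]
  obtain ⟨k, hk⟩ := (f.mem_maxGenEigenspace μ x).1 hx
  clear hx
  induction k generalizing x with
  | zero => rw [pow_zero, one_apply] at hk; rw [hk, map_zero]
  | succ k ih =>
    rw [pow_succ, mul_apply] at hk
    exact h (by rw [LinearMap.mem_ker, sq, mul_apply, ih _ hk])

end Module.End

namespace Matrix

variable {ι R : Type*} [Fintype ι] [DecidableEq ι]

theorem pow_mulVec_eq_self [Semiring R] {W : Matrix ι ι R} {x : ι → R} (hx : W *ᵥ x = x)
    (k : ℕ) : (W ^ k) *ᵥ x = x := by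
  induction k with
  | zero => simp
  | succ k ih => rw [pow_succ, ← mulVec_mulVec, hx, ih]

section OrderedRing

variable [CommRing R] [LinearOrder R] [IsOrderedRing R] {W : Matrix ι ι R} {x : ι → R}

theorem mulVec_apply_le_of_mem_rowStochastic (hW : W ∈ rowStochastic R ι) {c : R}
    (hx : ∀ j, x j ≤ c) (i : ι) : (W *ᵥ x) i ≤ c :=
  calc (W *ᵥ x) i = ∑ j, W i j * x j := rfl
    _ ≤ ∑ j, W i j * c := sum_le_sum fun j _ => mul_le_mul_of_nonneg_left (hx j) (hW.1 i j)
    _ = c := by rw [← sum_mul, sum_row_of_mem_rowStochastic hW, one_mul]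

theorem nonpos_of_mulVec_eq_add_const [Nonempty ι] (hW : W ∈ rowStochastic R ι) {a : R}
    (h : ∀ i, (W *ᵥ x) i = x i + a) : a ≤ 0 := by
  obtain ⟨i, -, hi⟩ := exists_max_image univ x univ_nonempty
  have := mulVec_apply_le_of_mem_rowStochastic hW (fun j => hi j (mem_univ j)) i
  rwa [h i, add_le_iff_nonpos_right] at this

theorem eq_zero_of_mulVec_eq_add_const [Nonempty ι] (hW : W ∈ rowStochastic R ι) {a : R}
    (h : ∀ i, (W *ᵥ x) i = x i + a) : a = 0 := by
  refine le_antisymm (nonpos_of_mulVec_eq_add_const hW h)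
    (neg_nonpos.1 <| nonpos_of_mulVec_eq_add_const hW (x := -x) fun i => ?_)
  rw [mulVec_neg, Pi.neg_apply, Pi.neg_apply, h]
  abel

end OrderedRing

section StrictOrderedRing

variable [CommRing R] [LinearOrder R] [IsStrictOrderedRing R] {W : Matrix ι ι R} {x : ι → R}

theorem apply_eq_of_mulVec_apply_eq_of_forall_le (hW : W ∈ rowStochastic R ι) {i j : ι}
    (hmax : ∀ k, x k ≤ x i) (hfix : (W *ᵥ x) i = x i) (hpos : 0 < W i j) : x j = x i := by
  have hsum : ∑ k, W i k * (x i - x k) = 0 := by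
    simp only [mul_sub, sum_sub_distrib, ← sum_mul, sum_row_of_mem_rowStochastic hW, one_mul]
    exact sub_eq_zero.2 hfix.symm
  have hj := (sum_eq_zero_iff_of_nonneg fun k _ =>
    mul_nonneg (hW.1 i k) (sub_nonneg.2 (hmax k))).1 hsum j (mem_univ j)
  linarith [(mul_eq_zero.1 hj).resolve_left hpos.ne']

theorem apply_eq_of_mulVec_eq_self (hW : W ∈ rowStochastic R ι) (hirr : W.IsIrreducible)
    (hx : W *ᵥ x = x) (i j : ι) : x i = x j := by
  obtain ⟨m, -, hm⟩ := exists_max_image univ x ⟨i, mem_univ i⟩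
  have hconst (j : ι) : x j = x m := by
    obtain ⟨k, -, hk⟩ := (isIrreducible_iff_exists_pow_pos hW.1).1 hirr m j
    exact apply_eq_of_mulVec_apply_eq_of_forall_le (pow_mem hW k) (fun l => hm l (mem_univ l))
      (congrFun (pow_mulVec_eq_self hx k) m) hk
  rw [hconst i, hconst j]

theorem mulVec_eq_self_of_mulVec_sub_eq (hW : W ∈ rowStochastic R ι) (hirr : W.IsIrreducible)
    (h : W *ᵥ (W *ᵥ x - x) = W *ᵥ x - x) : W *ᵥ x = x := by
  refine sub_eq_zero.1 (funext fun i => ?_)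
  have : Nonempty ι := ⟨i⟩
  refine eq_zero_of_mulVec_eq_add_const (x := x) hW fun j => ?_
  rw [← apply_eq_of_mulVec_eq_self hW hirr h j i, Pi.sub_apply]
  abel

end StrictOrderedRing

variable [Field R] [LinearOrder R] [IsStrictOrderedRing R] {W : Matrix ι ι R}

theorem eigenspace_toLin'_one_eq_span [Nonempty ι] (hW : W ∈ rowStochastic R ι)
    (hirr : W.IsIrreducible) :
    Module.End.eigenspace (toLin' W) 1 = R ∙ 1 := by
  ext x
  rw [Module.End.mem_eigenspace_iff, one_smul, toLin'_apply, Submodule.mem_span_singleton]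
  constructor
  · intro hx
    exact ⟨x (Classical.arbitrary ι), funext fun j => by
      simp [apply_eq_of_mulVec_eq_self hW hirr hx j (Classical.arbitrary ι)]⟩
  · rintro ⟨a, rfl⟩
    rw [mulVec_smul, one_vecMul_of_mem_rowStochastic hW]

theorem rootMultiplicity_one_charpoly_of_mem_rowStochastic [Nonempty ι]
    (hW : W ∈ rowStochastic R ι) (hirr : W.IsIrreducible) :
    W.charpoly.rootMultiplicity 1 = 1 := by
  rw [← charpoly_toLin', ← LinearMap.finrank_maxGenEigenspace_eq,
    Module.End.maxGenEigenspace_eq_eigenspace_of_ker_sq_le, eigenspace_toLin'_one_eq_span hW hirr,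
    finrank_span_singleton one_ne_zero]
  intro x
  simp only [LinearMap.mem_ker, sq, Module.End.mul_apply, one_smul, LinearMap.sub_apply,
    toLin'_apply, Module.End.one_apply, sub_eq_zero]
  exact mulVec_eq_self_of_mulVec_sub_eq hW hirr

end Matrix

/-- If a nonnegative row-stochastic matrix is irreducible, then 1
is a simple eigenvalue (algebraic multiplicity 1 as a root of the characteristic
polynomial). -/
theorem stmt_17 (n : ℕ) (hn : 0 < n) (W : Matrix (Fin n) (Fin n) ℝ)
    (hnonneg : ∀ i j, 0 ≤ W i j)
    (hrow : ∀ i, ∑ j, W i j = 1)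
    (hirr : ∀ i j : Fin n, ∃ m : ℕ, 1 ≤ m ∧ 0 < (W ^ m) i j) :
    Polynomial.rootMultiplicity 1 (Matrix.charpoly (W.map (Complex.ofReal ·))) = 1 := by
  have : Nonempty (Fin n) := ⟨⟨0, hn⟩⟩
  have hW : W ∈ Matrix.rowStochastic ℝ (Fin n) :=
    Matrix.mem_rowStochastic_iff_sum.2 ⟨hnonneg, hrow⟩
  have hW_irr : W.IsIrreducible := (Matrix.isIrreducible_iff_exists_pow_pos hnonneg).2 hirr
  rw [← Matrix.rootMultiplicity_one_charpoly_of_mem_rowStochastic hW hW_irr,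
    eq_rootMultiplicity_map Complex.ofRealHom.injective (1 : ℝ), map_one, ← Matrix.charpoly_map]
  rfl
end
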